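/- Let n ≥ 5 and f ≥ n − 2 be integers. Let R be a positive integer such that every graph on at least R vertices with clique number less than n contains an independent set of size n (i.e., R is an upper bound for the diagonal Ramsey number R(n,n)), and let g be an integer such that every graph on fewer than R vertices with clique number less than n has chromatic number at most g. Set N := max{ (n−1)·(n·g − (R−1) − n·f), R − 1 }. Then the following are equivalent: (a) every graph G with ω(G) < n that is not isomorphic to the complete graph K_{n−1} satisfies χ(G) ≤ ζ(G) + f; (b) every graph G with ω(G) < n and at most N vertices satisfies χ(G) ≤ ζ(G) + f. -/

import Mathlib

/-- A set of vertices is *independent* if it induces no edges. -/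
def SimpleGraph.IsIndependentSet {V : Type*} (G : SimpleGraph V) (s : Set V) : Prop :=
  s.Pairwise fun u v => ¬ G.Adj u v

/-- A set of vertices is *homogeneous* if it is independent or a clique. -/
def SimpleGraph.IsHomogeneousSet {V : Type*} (G : SimpleGraph V) (s : Set V) : Prop :=
  G.IsIndependentSet s ∨ G.IsClique s

/-- The *cochromatic number* of a finite graph: the minimum size of a partition of the
vertex set into homogeneous sets (phrased via functions to `Fin k` with homogeneous fibers). -/
noncomputable def SimpleGraph.cochromaticNumber {V : Type*} [Fintype V]
    (G : SimpleGraph V) : ℕ :=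
  sInf {k | ∃ p : V → Fin k, ∀ i, G.IsHomogeneousSet (p ⁻¹' {i})}

open SimpleGraph
open scoped Classical

section Aux

variable {V : Type*} [Fintype V] {G : SimpleGraph V}

omit [Fintype V] in
lemma homog_subset {A : Set V} (hA : G.IsHomogeneousSet A) {W : Set V} (s : Set ↑W)
    (hs : ∀ v ∈ s, (v : V) ∈ A) : (G.induce W).IsHomogeneousSet s := by
  have hval : ∀ ⦃a b : ↑W⦄, a ≠ b → (a : V) ≠ b := fun a b hab e => hab (Subtype.ext e)
  cases hA with
  | inl h => exact Or.inl (fun a ha b hb hab => h (hs a ha) (hs b hb) (hval hab))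
  | inr h => exact Or.inr (fun a ha b hb hab => h (hs a ha) (hs b hb) (hval hab))

lemma cochrom_mem :
    Fintype.card V ∈ {k | ∃ p : V → Fin k, ∀ i, G.IsHomogeneousSet (p ⁻¹' {i})} := by
  refine ⟨Fintype.equivFin V, fun i => Or.inl (fun a ha b hb hab => absurd ?_ hab)⟩
  have : Fintype.equivFin V a = Fintype.equivFin V b := by
    rw [Set.mem_preimage, Set.mem_singleton_iff] at ha hb; rw [ha, hb]
  exact (Fintype.equivFin V).injective this

lemma cochrom_witness :
    ∃ p : V → Fin G.cochromaticNumber, ∀ i, G.IsHomogeneousSet (p ⁻¹' {i}) :=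
  Nat.sInf_mem ⟨_, cochrom_mem (G := G)⟩

lemma cochrom_le {k : ℕ} (p : V → Fin k) (hp : ∀ i, G.IsHomogeneousSet (p ⁻¹' {i})) :
    G.cochromaticNumber ≤ k := Nat.sInf_le ⟨p, hp⟩

lemma cochrom_pos [Nonempty V] : 1 ≤ G.cochromaticNumber := by
  obtain ⟨p, -⟩ := cochrom_witness (G := G)
  refine Nat.one_le_iff_ne_zero.mpr (fun h => ?_)
  rw [h] at p
  exact (p (Classical.arbitrary V)).elim0

lemma cochrom_compl_le {z : ℕ} (hz1 : 1 ≤ z) (p : V → Fin z)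
    (hp : ∀ i, G.IsHomogeneousSet (p ⁻¹' {i})) (i : Fin z) :
    (G.induce (p ⁻¹' {i})ᶜ).cochromaticNumber ≤ z - 1 := by
  obtain ⟨m, rfl⟩ : ∃ m, z = m + 1 := ⟨z - 1, by omega⟩
  have hne : ∀ v : ↑(p ⁻¹' {i})ᶜ, p ↑v ≠ i := fun v hv => v.2 hv
  choose q hq using fun v : ↑(p ⁻¹' {i})ᶜ => Fin.exists_succAbove_eq (hne v)
  have h1 : (G.induce (p ⁻¹' {i})ᶜ).cochromaticNumber ≤ m := by
    refine cochrom_le q (fun k => homog_subset (hp (i.succAbove k)) (q ⁻¹' {k}) ?_)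
    intro v hv
    rw [Set.mem_preimage, Set.mem_singleton_iff] at hv ⊢
    rw [← hq v, hv]
  omega

end Aux

lemma cliqueNum_induce_lt (V : Type) [Fintype V] (G : SimpleGraph V) (W : Set V) (n : ℕ)
    (h : G.cliqueNum < n) : (G.induce W).cliqueNum < n := by
  by_contra hc
  push_neg at hc
  obtain ⟨s, hs⟩ := (G.induce W).exists_isNClique_cliqueNum
  have hclique : G.IsClique ((s.map (Function.Embedding.subtype _)) : Finset V) := by
    intro x hx y hy hxy
    simp only [Finset.coe_map, Set.mem_image, Finset.mem_coe] at hx hy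
    obtain ⟨a, ha, rfl⟩ := hx
    obtain ⟨b, hb, rfl⟩ := hy
    have hab : a ≠ b := fun e => hxy (by rw [e])
    exact hs.isClique ha hb hab
  have := @SimpleGraph.IsClique.card_le_cliqueNum V G _ _ hclique
  rw [Finset.card_map, hs.card_eq] at this
  omega

lemma colorable_of_compl_indep (V : Type) (G : SimpleGraph V) (S : Set V)
    (hS : G.IsIndependentSet S) (k : ℕ) (h : (G.induce Sᶜ).Colorable k) :
    G.Colorable (k + 1) := by
  obtain ⟨c⟩ := h
  refine ⟨⟨fun v => if hv : v ∈ S then Fin.last k else (c ⟨v, hv⟩).castSucc, ?_⟩⟩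
  intro u v huv
  split_ifs with hu hv hv
  · exact absurd huv (hS hu hv (fun e => G.ne_of_adj huv e))
  · exact fun e => absurd e.symm (Fin.castSucc_lt_last _).ne
  · exact fun e => absurd e (Fin.castSucc_lt_last _).ne
  · have := c.valid (v := ⟨u, hu⟩) (w := ⟨v, hv⟩) (by exact huv)
    exact fun e => this (Fin.castSucc_injective _ e)

lemma lemmaD (n R g : ℕ) (hR : 0 < R)
    (hRamsey : ∀ (V : Type) (inst : Fintype V) (G : SimpleGraph V),
      R ≤ @Fintype.card V inst → G.cliqueNum < n →
        ∃ s : Finset V, s.card = n ∧ G.IsIndependentSet ↑s)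
    (hg : ∀ (V : Type) (inst : Fintype V) (G : SimpleGraph V),
      @Fintype.card V inst < R → G.cliqueNum < n → G.chromaticNumber ≤ (g : ℕ∞)) :
    ∀ (s : ℕ) (V : Type) (inst : Fintype V) (G : SimpleGraph V), G.cliqueNum < n →
      @Fintype.card V inst ≤ R - 1 + s * n → G.Colorable (g + s) := by
  intro s
  induction s with
  | zero =>
    intro V inst G hω hcard
    letI := inst
    have : G.chromaticNumber ≤ (g : ℕ∞) := hg V inst G (by omega) hω
    simpa using SimpleGraph.chromaticNumber_le_iff_colorable.mp this
  | succ s IH =>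
    intro V inst G hω hcard
    letI := inst
    rw [Nat.succ_mul] at hcard
    by_cases hc : Fintype.card V ≤ R - 1 + s * n
    · exact (IH V inst G hω hc).mono (by omega)
    · have hcardR : R ≤ Fintype.card V := by omega
      obtain ⟨S, hScard, hSind⟩ := hRamsey V inst G hcardR hω
      have hcW : Fintype.card ↑((↑S : Set V)ᶜ) = Fintype.card V - n := by
        rw [Fintype.card_compl_set]
        congr 1
        rw [← hScard]
        exact Fintype.card_coe S
      have hcol : (G.induce ((↑S : Set V)ᶜ)).Colorable (g + s) := by
        refine IH ↑((↑S : Set V)ᶜ) inferInstance (G.induce _) (cliqueNum_induce_lt V G _ n hω) ?_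
        rw [Fintype.card_congr (Equiv.refl _), hcW]
        omega
      exact colorable_of_compl_indep V G _ hSind _ hcol

/-- **Proposition 1.** Let `n ≥ 5` and `f ≥ n − 2` be integers.  Let `R > 0` be such that every
graph on at least `R` vertices with clique number less than `n` contains an independent set of
size `n`, and let `g` be such that every graph on fewer than `R` vertices with clique number
less than `n` has chromatic number at most `g`.  With
`N := max ((n−1)·(n·g − (R−1) − n·f)) (R−1)`, the following are equivalent:
(a) every graph `G ≄ K_{n−1}` with `ω(G) < n` satisfies `χ(G) ≤ ζ(G) + f`;
(b) every graph `G` with `ω(G) < n` on at most `N` vertices satisfies `χ(G) ≤ ζ(G) + f`. -/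
theorem finite_check_suffices (n f R g : ℕ) (hn : 5 ≤ n) (hf : n - 2 ≤ f) (hR : 0 < R)
    (hRamsey : ∀ (V : Type) (inst : Fintype V) (G : SimpleGraph V),
      R ≤ @Fintype.card V inst → G.cliqueNum < n →
        ∃ s : Finset V, s.card = n ∧ G.IsIndependentSet ↑s)
    (hg : ∀ (V : Type) (inst : Fintype V) (G : SimpleGraph V),
      @Fintype.card V inst < R → G.cliqueNum < n → G.chromaticNumber ≤ (g : ℕ∞)) :
    (∀ (V : Type) (inst : Fintype V) (G : SimpleGraph V), G.cliqueNum < n →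
        ¬ Nonempty (G ≃g completeGraph (Fin (n - 1))) →
        G.chromaticNumber ≤ ((@SimpleGraph.cochromaticNumber V inst G + f : ℕ) : ℕ∞))
      ↔
    (∀ (V : Type) (inst : Fintype V) (G : SimpleGraph V), G.cliqueNum < n →
        @Fintype.card V inst ≤ max ((n - 1) * (n * g - (R - 1) - n * f)) (R - 1) →
        G.chromaticNumber ≤ ((@SimpleGraph.cochromaticNumber V inst G + f : ℕ) : ℕ∞)) := by
  constructor
  · -- (a) → (b)
    intro ha V inst G hω _hcard
    letI := inst
    by_cases hiso : Nonempty (G ≃g completeGraph (Fin (n - 1)))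
    · obtain ⟨e⟩ := hiso
      haveI : Nonempty V := ⟨e.symm (⟨0, by omega⟩ : Fin (n - 1))⟩
      have hcol : G.Colorable (n - 1) := by
        have h1 : (completeGraph (Fin (n - 1))).Colorable (n - 1) := by
          simpa using (completeGraph (Fin (n - 1))).colorable_of_fintype
        exact SimpleGraph.Colorable.of_hom e.toEmbedding.toHom h1
      have h1 : 1 ≤ G.cochromaticNumber := cochrom_pos
      exact SimpleGraph.chromaticNumber_le_iff_colorable.mpr (hcol.mono (by omega))
    · exact ha V inst G hω hiso
  · -- (b) → (a)
    intro hb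
    have key : ∀ (m : ℕ) (V : Type) (inst : Fintype V) (G : SimpleGraph V),
        @Fintype.card V inst = m → G.cliqueNum < n →
        G.chromaticNumber ≤ ((@SimpleGraph.cochromaticNumber V inst G + f : ℕ) : ℕ∞) := by
      intro m
      induction m using Nat.strong_induction_on with
      | _ m IH =>
        intro V inst G hm hω
        letI := inst
        by_cases hsmall : Fintype.card V ≤ max ((n - 1) * (n * g - (R - 1) - n * f)) (R - 1)
        · exact hb V inst G hω hsmall
        · push_neg at hsmall
          have hRm : R ≤ m := by
            have := lt_of_le_of_lt (le_max_right ((n - 1) * (n * g - (R - 1) - n * f)) (R - 1))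
              hsmall
            omega
          haveI : Nonempty V := Fintype.card_pos_iff.mp (by omega)
          by_contra hcon
          set z := G.cochromaticNumber with hzdef
          have hnotcol : ¬ G.Colorable (z + f) := fun hc =>
            hcon (SimpleGraph.chromaticNumber_le_iff_colorable.mpr hc)
          obtain ⟨p, hp⟩ := cochrom_witness (G := G)
          have hz1 : 1 ≤ z := cochrom_pos
          -- every fiber of `p` is a clique
          have hfib : ∀ i, G.IsClique (p ⁻¹' {i}) := by
            intro i
            rcases hp i with hInd | hCl
            · by_cases hem : (p ⁻¹' {i}) = ∅
              · rw [hem]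
                intro a ha
                exact absurd ha (Set.notMem_empty a)
              · obtain ⟨v, hv⟩ := Set.nonempty_iff_ne_empty.mpr hem
                have hlt : Fintype.card ↑((p ⁻¹' {i})ᶜ) < m := by
                  rw [Fintype.card_compl_set]
                  have h1 : 0 < Fintype.card ↑(p ⁻¹' {i}) := Fintype.card_pos_iff.mpr ⟨⟨v, hv⟩⟩
                  have h2 : Fintype.card ↑(p ⁻¹' {i}) ≤ Fintype.card V :=
                    Fintype.card_le_of_injective _ Subtype.val_injective
                  omega
                have hsub := IH _ hlt ↑((p ⁻¹' {i})ᶜ) inferInstance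
                  (G.induce ((p ⁻¹' {i})ᶜ)) rfl (cliqueNum_induce_lt V G _ n hω)
                have hζ' := cochrom_compl_le hz1 p hp i
                have hcol : (G.induce ((p ⁻¹' {i})ᶜ)).Colorable
                    ((G.induce ((p ⁻¹' {i})ᶜ)).cochromaticNumber + f) :=
                  SimpleGraph.chromaticNumber_le_iff_colorable.mp hsub
                have hcol2 : (G.induce ((p ⁻¹' {i})ᶜ)).Colorable (z - 1 + f) :=
                  hcol.mono (by omega)
                have hcol3 : G.Colorable (z - 1 + f + 1) :=
                  colorable_of_compl_indep V G _ hInd _ hcol2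
                exact (hnotcol (hcol3.mono (by omega))).elim
            · exact hCl
          -- consequently the graph is small relative to z
          have hm1 : m ≤ z * (n - 1) := by
            have hsum : (Finset.univ : Finset V).card =
                ∑ i : Fin z, ((Finset.univ : Finset V).filter fun v => p v = i).card :=
              Finset.card_eq_sum_card_fiberwise (fun x _ => Finset.mem_univ _)
            have hle : ∀ i ∈ (Finset.univ : Finset (Fin z)),
                ((Finset.univ : Finset V).filter fun v => p v = i).card ≤ n - 1 := by
              intro i _
              have hset : (((Finset.univ : Finset V).filter fun v => p v = i) : Set V)
                  = p ⁻¹' {i} := by ext v; simp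
              have hcl : G.IsClique
                  (((Finset.univ : Finset V).filter fun v => p v = i) : Set V) := by
                rw [hset]; exact hfib i
              have hcc := SimpleGraph.IsClique.card_le_cliqueNum (tc := hcl)
              omega
            have hb2 := Finset.sum_le_card_nsmul Finset.univ _ (n - 1) hle
            rw [Finset.card_univ, Fintype.card_fin, smul_eq_mul] at hb2
            rw [← hm, ← Finset.card_univ]
            omega
          -- the deletion process
          have hex : ∃ t, m ≤ R - 1 + t * n := by
            refine ⟨m, ?_⟩
            have := Nat.le_mul_of_pos_right m (show 0 < n by omega)
            omega
          have ht4 : m ≤ R - 1 + Nat.find hex * n := Nat.find_spec hex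
          set t := Nat.find hex with htdef
          have ht1 : 1 ≤ t := by
            by_contra h0
            push_neg at h0
            have h0' : t = 0 := by omega
            rw [h0', Nat.zero_mul] at ht4
            omega
          have ht3 : R - 1 + (t - 1) * n + 1 ≤ m := by
            have := Nat.find_min hex (show t - 1 < t by omega)
            omega
          have hcolg : G.Colorable (g + t) := by
            refine lemmaD n R g hR hRamsey hg t V inst G hω ?_
            rw [hm]; exact ht4
          have ht2 : z + f + 1 ≤ g + t := by
            by_contra hle2
            push_neg at hle2
            exact hnotcol (hcolg.mono (by omega))
          -- final arithmetic contradiction, in ℤ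
          set A := n * g - (R - 1) - n * f with hA
          have hmaxN : (n - 1) * A < m := by
            have := lt_of_le_of_lt (le_max_left ((n - 1) * A) (R - 1)) hsmall
            omega
          have hn1 : (5 : ℤ) ≤ (n : ℤ) := by exact_mod_cast hn
          have i1 : (m : ℤ) ≤ (z : ℤ) * ((n : ℤ) - 1) := by
            have h := hm1
            zify [show (1 : ℕ) ≤ n by omega] at h
            exact h
          have i2 : (z : ℤ) + f + 1 ≤ (g : ℤ) + t := by exact_mod_cast ht2
          have i3 : (R : ℤ) + ((t : ℤ) - 1) * (n : ℤ) ≤ (m : ℤ) := by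
            have h := ht3
            zify [show (1 : ℕ) ≤ R by omega, show (1 : ℕ) ≤ t from ht1] at h
            linarith
          have i4 : (m : ℤ) ≤ (R : ℤ) - 1 + (t : ℤ) * (n : ℤ) := by
            have h := ht4
            zify [show (1 : ℕ) ≤ R by omega] at h
            linarith
          have i6 : ((n : ℤ) - 1) * (A : ℤ) < (m : ℤ) := by
            have h := hmaxN
            zify [show (1 : ℕ) ≤ n by omega] at h
            linarith
          have i7 : (n : ℤ) * g - ((R : ℤ) - 1) - (n : ℤ) * f ≤ (A : ℤ) := by
            have hng : ((n * g : ℕ) : ℤ) = (n : ℤ) * g := by push_cast; ring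
            have hnf : ((n * f : ℕ) : ℤ) = (n : ℤ) * f := by push_cast; ring
            have h : ((n * g : ℕ) : ℤ) - ((R : ℤ) - 1) - ((n * f : ℕ) : ℤ) ≤ (A : ℤ) := by
              rw [hA]
              omega
            rw [hng, hnf] at h
            exact h
          have s2 : (m : ℤ) ≤ ((g : ℤ) + t - f - 1) * ((n : ℤ) - 1) :=
            le_trans i1 (mul_le_mul_of_nonneg_right (by linarith) (by linarith))
          have e0 : ((t : ℤ) - 1) * (n : ℤ) = (t : ℤ) * n - n := by ring
          have e1 : ((g : ℤ) + t - f - 1) * ((n : ℤ) - 1)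
              = ((g : ℤ) - f - 1) * ((n : ℤ) - 1) + (t : ℤ) * n - t := by ring
          have s3 : (t : ℤ) ≤ ((g : ℤ) - f - 1) * ((n : ℤ) - 1) + n - R := by linarith
          have s4 : (t : ℤ) * n ≤ (((g : ℤ) - f - 1) * ((n : ℤ) - 1) + n - R) * n :=
            mul_le_mul_of_nonneg_right s3 (by linarith)
          have e2 : (R : ℤ) - 1 + (((g : ℤ) - f - 1) * ((n : ℤ) - 1) + n - R) * n
              = ((n : ℤ) - 1) * ((n : ℤ) * g - (n : ℤ) * f - ((R : ℤ) - 1)) := by ring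
          have s6 : ((n : ℤ) - 1) * ((n : ℤ) * g - (n : ℤ) * f - ((R : ℤ) - 1))
              ≤ ((n : ℤ) - 1) * (A : ℤ) :=
            mul_le_mul_of_nonneg_left (by linarith) (by linarith)
          linarith
    intro V inst G hω _hniso
    exact key (@Fintype.card V inst) V inst G rfl hω
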